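/- Let $\{\Delta_t\}$ be a stochastic contraction process with average rate $\bar M$, and let $N_t$ be defined by $N_0=\bar M$, $N_{t+1}=N_t(I-2\bar M)+\|N_t\|\cdot \bar M$. Then for every $t\ge0$, $\mathbb{E}\,\|\Delta_t\|_{\bar M}^2 \le \mathbb{E}\,\|\Delta_0\|_{N_t}^2$. -/

import Mathlib

/-!
For `0 ≼ A ≼ 1` and any `N` one has `(1 - A) N (1 - A) = N - AN - NA + ANA` and, as quadratic
forms, `ANA ≼ ‖N‖ A² ≼ ‖N‖ A`. Since the expression `N - AN - NA + ‖N‖ A` is affine in `A` and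
`M_t` is independent of `Δ_t`, taking expectations replaces `M_t` by `M̄`:
`𝔼 ‖Δ_{t+1}‖²_N ≤ 𝔼 ‖Δ_t‖²_{N - M̄N - NM̄ + ‖N‖M̄}`. Every `N_s` commutes with `M̄`, so for
`N = N_s` the right-hand matrix is `N_{s+1}`, and induction on `s` (peeling off the first step,
for all starting times at once) gives `𝔼 ‖Δ_{u+s}‖²_{M̄} ≤ 𝔼 ‖Δ_u‖²_{N_s}`. All integrals are
finite because `|Δ_t| ≤ |Δ_0|` and the entries of `M_t` lie in `[-1, 1]`.
-/

open MeasureTheory ProbabilityTheory Matrix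
open scoped Matrix.Norms.L2Operator

/-- The product `σ`-algebra on matrices (entrywise). -/
instance matrixMeasurableSpace {n : ℕ} : MeasurableSpace (Matrix (Fin n) (Fin n) ℝ) :=
  (inferInstance : MeasurableSpace (Fin n → Fin n → ℝ))

namespace Matrix

variable {n : Type*} [Fintype n]

lemma dotProduct_mulVec_eq_sum (A : Matrix n n ℝ) (x : n → ℝ) :
    x ⬝ᵥ (A *ᵥ x) = ∑ i, ∑ j, A i j * (x i * x j) := by
  simp only [dotProduct, mulVec, Finset.mul_sum]
  exact Finset.sum_congr rfl fun i _ => Finset.sum_congr rfl fun j _ => by ring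

lemma mulVec_dotProduct_mulVec_mulVec (S N : Matrix n n ℝ) (x : n → ℝ) :
    (S *ᵥ x) ⬝ᵥ (N *ᵥ (S *ᵥ x)) = x ⬝ᵥ ((Sᵀ * N * S) *ᵥ x) := by
  rw [← mulVec_mulVec, ← mulVec_mulVec, dotProduct_mulVec x Sᵀ, vecMul_transpose]

lemma abs_mul_apply_le_dotProduct_self (x : n → ℝ) (i j : n) : |x i * x j| ≤ x ⬝ᵥ x := by
  have hsq (k : n) : x k * x k ≤ x ⬝ᵥ x :=
    Finset.single_le_sum (f := fun k => x k * x k) (fun k _ => mul_self_nonneg _)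
      (Finset.mem_univ k)
  rw [abs_le]
  constructor <;> nlinarith [hsq i, hsq j, sq_nonneg (x i + x j), sq_nonneg (x i - x j)]

variable [DecidableEq n]

lemma dotProduct_mulVec_le_l2_opNorm_mul (A : Matrix n n ℝ) (x : n → ℝ) :
    x ⬝ᵥ (A *ᵥ x) ≤ ‖A‖ * (x ⬝ᵥ x) := by
  set X : EuclideanSpace ℝ n := WithLp.toLp 2 x
  have hX : ‖X‖ ^ 2 = x ⬝ᵥ x := by
    rw [EuclideanSpace.norm_sq_eq]; simp [X, dotProduct, sq]
  calc x ⬝ᵥ (A *ᵥ x) = inner ℝ X (WithLp.toLp 2 (A *ᵥ x)) := by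
        simp [X, EuclideanSpace.inner_eq_star_dotProduct, dotProduct_comm]
    _ ≤ ‖X‖ * (‖A‖ * ‖X‖) := (real_inner_le_norm _ _).trans
        (mul_le_mul_of_nonneg_left (A.l2_opNorm_mulVec X) (norm_nonneg _))
    _ = ‖A‖ * (x ⬝ᵥ x) := by rw [← hX]; ring

/-- `(1 - A) N (1 - A) = N - AN - NA + ANA`, with `ANA` replaced by its bound `‖N‖ A`
for `0 ≼ A ≼ 1`. -/
noncomputable def pullbackBound (N : Matrix n n ℝ) : Matrix n n ℝ →ᵃ[ℝ] Matrix n n ℝ where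
  toFun A := N - A * N - N * A + ‖N‖ • A
  linear := -LinearMap.mulRight ℝ N - LinearMap.mulLeft ℝ N + ‖N‖ • LinearMap.id
  map_vadd' A B := by
    simp only [vadd_eq_add, LinearMap.sub_apply, LinearMap.neg_apply, LinearMap.add_apply,
      LinearMap.mulRight_apply, LinearMap.mulLeft_apply, LinearMap.smul_apply, LinearMap.id_apply,
      add_mul, mul_add, smul_add]
    abel

lemma pullbackBound_apply (N A : Matrix n n ℝ) :
    pullbackBound N A = N - A * N - N * A + ‖N‖ • A := rfl

lemma pullbackBound_eq_of_commute {N B : Matrix n n ℝ} (h : Commute N B) :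
    pullbackBound N B = N * (1 - (2 : ℝ) • B) + ‖N‖ • B := by
  rw [pullbackBound_apply, h.symm.eq, mul_sub, mul_one, mul_smul_comm, two_smul]
  abel

namespace PosSemidef

variable {A : Matrix n n ℝ}

lemma mulVec_dotProduct_mulVec_self_le (hA : A.PosSemidef) (hA₁ : (1 - A).PosSemidef)
    (x : n → ℝ) : (A *ᵥ x) ⬝ᵥ (A *ᵥ x) ≤ x ⬝ᵥ (A *ᵥ x) := by
  have hsplit : A - A * A = Aᴴ * (1 - A) * A + (1 - A)ᴴ * A * (1 - A) := by
    rw [hA.isHermitian.eq, hA₁.isHermitian.eq]; noncomm_ring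
  have hpos : (A - A * A).PosSemidef := by
    rw [hsplit]
    exact (hA₁.conjTranspose_mul_mul_same A).add (hA.conjTranspose_mul_mul_same (1 - A))
  have hsq : (A *ᵥ x) ⬝ᵥ (A *ᵥ x) = x ⬝ᵥ ((A * A) *ᵥ x) := by
    simpa [show Aᵀ = A from hA.isHermitian] using mulVec_dotProduct_mulVec_mulVec A 1 x
  have h := hpos.dotProduct_mulVec_nonneg x
  rw [star_trivial, sub_mulVec, dotProduct_sub] at h
  linarith

lemma mulVec_dotProduct_mulVec_self_le_dotProduct_self (hA : A.PosSemidef)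
    (hA₁ : (1 - A).PosSemidef) (x : n → ℝ) : (A *ᵥ x) ⬝ᵥ (A *ᵥ x) ≤ x ⬝ᵥ x := by
  have h := hA₁.dotProduct_mulVec_nonneg x
  rw [star_trivial, sub_mulVec, one_mulVec, dotProduct_sub] at h
  linarith [hA.mulVec_dotProduct_mulVec_self_le hA₁ x]

lemma abs_apply_le_one (hA : A.PosSemidef) (hA₁ : (1 - A).PosSemidef) (i j : n) :
    |A i j| ≤ 1 := by
  have h := hA.mulVec_dotProduct_mulVec_self_le_dotProduct_self hA₁ (Pi.single j 1)
  rw [mulVec_single_one, single_dotProduct, one_mul, Pi.single_eq_same] at h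
  refine abs_le_one_iff_mul_self_le_one.mpr ?_
  exact (le_abs_self _).trans <| (abs_mul_apply_le_dotProduct_self (A.col j) i i).trans h

lemma one_sub_mulVec_dotProduct_mulVec_le (hA : A.PosSemidef) (hA₁ : (1 - A).PosSemidef)
    (N : Matrix n n ℝ) (x : n → ℝ) :
    ((1 - A) *ᵥ x) ⬝ᵥ (N *ᵥ ((1 - A) *ᵥ x)) ≤ x ⬝ᵥ (pullbackBound N A *ᵥ x) := by
  have hexpand : (1 - A)ᵀ * N * (1 - A) = N - A * N - N * A + Aᵀ * N * A := by
    rw [transpose_sub, transpose_one, show Aᵀ = A from hA.isHermitian]; noncomm_ring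
  have hquad : x ⬝ᵥ ((Aᵀ * N * A) *ᵥ x) ≤ ‖N‖ * (x ⬝ᵥ (A *ᵥ x)) := by
    rw [← mulVec_dotProduct_mulVec_mulVec]
    exact (dotProduct_mulVec_le_l2_opNorm_mul N _).trans <| mul_le_mul_of_nonneg_left
      (hA.mulVec_dotProduct_mulVec_self_le hA₁ x) (norm_nonneg _)
  rw [mulVec_dotProduct_mulVec_mulVec, hexpand, pullbackBound_apply]
  simp only [add_mulVec, sub_mulVec, smul_mulVec, dotProduct_add, dotProduct_sub,
    dotProduct_smul, smul_eq_mul] at hquad ⊢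
  linarith

end PosSemidef

lemma dotProduct_self_le_of_one_sub_mulVec {X : ℕ → n → ℝ} {A : ℕ → Matrix n n ℝ}
    (hA : ∀ t, (A t).PosSemidef) (hA₁ : ∀ t, (1 - A t).PosSemidef)
    (hX : ∀ t, X (t + 1) = (1 - A t) *ᵥ X t) (t : ℕ) : X t ⬝ᵥ X t ≤ X 0 ⬝ᵥ X 0 := by
  induction t with
  | zero => exact le_rfl
  | succ t ih =>
    rw [hX]
    exact ((hA₁ t).mulVec_dotProduct_mulVec_self_le_dotProduct_self
      (by simpa using hA t) _).trans ih

end Matrix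

lemma AffineMap.apply_apply_eq_add_sum {n : Type*} [Fintype n] [DecidableEq n]
    (f : Matrix n n ℝ →ᵃ[ℝ] Matrix n n ℝ) (A : Matrix n n ℝ) (i j : n) :
    f A i j = f 0 i j + ∑ k, ∑ l, A k l * f.linear (single k l 1) i j := by
  have hsingle (k l : n) : single k l (A k l) = A k l • single k l (1 : ℝ) := by
    rw [smul_single, smul_eq_mul, mul_one]
  conv_lhs => rw [f.decomp, A.matrix_eq_sum_single]
  simp only [hsingle, map_sum, map_smul, Pi.add_apply, add_comm]
  simp [Matrix.sum_apply]

section Expectation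

variable {Ω : Type*} [MeasurableSpace Ω] {μ : Measure Ω}

section

variable {n : Type*} [Fintype n]

lemma integrable_mul_apply_of_dotProduct_self_le {X X₀ : Ω → n → ℝ} (hX : Measurable X)
    (hX₀ : Integrable (fun ω => X₀ ω ⬝ᵥ X₀ ω) μ) (hle : ∀ ω, X ω ⬝ᵥ X ω ≤ X₀ ω ⬝ᵥ X₀ ω)
    (i j : n) : Integrable (fun ω => X ω i * X ω j) μ :=
  hX₀.mono' (by fun_prop) <| .of_forall fun ω =>
    (abs_mul_apply_le_dotProduct_self (X ω) i j).trans (hle ω)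

lemma integrable_dotProduct_mulVec {X : Ω → n → ℝ}
    (hX : ∀ i j, Integrable (fun ω => X ω i * X ω j) μ) (A : Matrix n n ℝ) :
    Integrable (fun ω => X ω ⬝ᵥ (A *ᵥ X ω)) μ := by
  simp only [dotProduct_mulVec_eq_sum]
  exact integrable_finsetSum _ fun i _ => integrable_finsetSum _ fun j _ =>
    (hX i j).const_mul _

lemma integral_dotProduct_mulVec {X : Ω → n → ℝ}
    (hX : ∀ i j, Integrable (fun ω => X ω i * X ω j) μ) (A : Matrix n n ℝ) :
    ∫ ω, X ω ⬝ᵥ (A *ᵥ X ω) ∂μ = ∑ i, ∑ j, A i j * ∫ ω, X ω i * X ω j ∂μ := by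
  simp only [dotProduct_mulVec_eq_sum]
  rw [integral_finsetSum _ fun i _ => integrable_finsetSum _ fun j _ =>
    (hX i j).const_mul (A i j)]
  refine Finset.sum_congr rfl fun i _ => ?_
  rw [integral_finsetSum _ fun j _ => (hX i j).const_mul _]
  exact Finset.sum_congr rfl fun j _ => integral_const_mul _ _

variable [DecidableEq n] {Y : Ω → Matrix n n ℝ} (f : Matrix n n ℝ →ᵃ[ℝ] Matrix n n ℝ)

lemma integrable_affineMap_apply [IsFiniteMeasure μ]
    (hY : ∀ k l, Integrable (fun ω => Y ω k l) μ) (i j : n) :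
    Integrable (fun ω => f (Y ω) i j) μ := by
  rw [funext fun ω => f.apply_apply_eq_add_sum (Y ω) i j]
  exact (integrable_const _).add <| integrable_finsetSum _ fun k _ =>
    integrable_finsetSum _ fun l _ => (hY k l).mul_const _

lemma integral_affineMap_apply [IsProbabilityMeasure μ] {Ybar : Matrix n n ℝ}
    (hY : ∀ k l, Integrable (fun ω => Y ω k l) μ) (hmean : ∀ k l, ∫ ω, Y ω k l ∂μ = Ybar k l)
    (i j : n) : ∫ ω, f (Y ω) i j ∂μ = f Ybar i j := by
  rw [funext fun ω => f.apply_apply_eq_add_sum (Y ω) i j, f.apply_apply_eq_add_sum Ybar i j]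
  rw [integral_add (integrable_const _) (integrable_finsetSum _ fun k _ =>
    integrable_finsetSum _ fun l _ => (hY k l).mul_const _), integral_const, probReal_univ,
    one_smul, integral_finsetSum _ fun k _ =>
    integrable_finsetSum _ fun l _ => (hY k l).mul_const _]
  congr 1
  refine Finset.sum_congr rfl fun k _ => ?_
  rw [integral_finsetSum _ fun l _ => (hY k l).mul_const _]
  exact Finset.sum_congr rfl fun l _ => by rw [integral_mul_const, hmean]

end

variable {n : ℕ} {X : Ω → Fin n → ℝ} {Y : Ω → Matrix (Fin n) (Fin n) ℝ}

lemma integrable_apply_of_posSemidef [IsFiniteMeasure μ] (hY : Measurable Y)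
    (hY₀ : ∀ ω, (Y ω).PosSemidef) (hY₁ : ∀ ω, (1 - Y ω).PosSemidef) (k l : Fin n) :
    Integrable (fun ω => Y ω k l) μ :=
  (integrable_const (1 : ℝ)).mono' (by fun_prop) <| .of_forall fun ω =>
    (hY₀ ω).abs_apply_le_one (hY₁ ω) k l

lemma measurable_affineMap_apply (f : Matrix (Fin n) (Fin n) ℝ →ᵃ[ℝ] Matrix (Fin n) (Fin n) ℝ)
    (i j : Fin n) : Measurable fun A => f A i j := by
  rw [funext fun A => f.apply_apply_eq_add_sum A i j]
  fun_prop

lemma ProbabilityTheory.IndepFun.affineMap_apply_mul (hXY : IndepFun X Y μ)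
    (f : Matrix (Fin n) (Fin n) ℝ →ᵃ[ℝ] Matrix (Fin n) (Fin n) ℝ) (i j : Fin n) :
    IndepFun (fun ω => f (Y ω) i j) (fun ω => X ω i * X ω j) μ :=
  hXY.symm.comp (measurable_affineMap_apply f i j) (ψ := fun x : Fin n → ℝ => x i * x j)
    (by fun_prop)

lemma integrable_dotProduct_affineMap_mulVec_of_indepFun [IsFiniteMeasure μ]
    (hXY : IndepFun X Y μ) (hX : ∀ i j, Integrable (fun ω => X ω i * X ω j) μ)
    (hY : ∀ k l, Integrable (fun ω => Y ω k l) μ)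
    (f : Matrix (Fin n) (Fin n) ℝ →ᵃ[ℝ] Matrix (Fin n) (Fin n) ℝ) :
    Integrable (fun ω => X ω ⬝ᵥ (f (Y ω) *ᵥ X ω)) μ := by
  simp only [dotProduct_mulVec_eq_sum]
  exact integrable_finsetSum _ fun i _ => integrable_finsetSum _ fun j _ =>
    (hXY.affineMap_apply_mul f i j).integrable_mul (integrable_affineMap_apply f hY i j) (hX i j)

lemma integral_dotProduct_affineMap_mulVec_of_indepFun [IsProbabilityMeasure μ]
    {Ybar : Matrix (Fin n) (Fin n) ℝ} (hXY : IndepFun X Y μ)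
    (hX : ∀ i j, Integrable (fun ω => X ω i * X ω j) μ)
    (hY : ∀ k l, Integrable (fun ω => Y ω k l) μ) (hmean : ∀ k l, ∫ ω, Y ω k l ∂μ = Ybar k l)
    (f : Matrix (Fin n) (Fin n) ℝ →ᵃ[ℝ] Matrix (Fin n) (Fin n) ℝ) :
    ∫ ω, X ω ⬝ᵥ (f (Y ω) *ᵥ X ω) ∂μ = ∫ ω, X ω ⬝ᵥ (f Ybar *ᵥ X ω) ∂μ := by
  have hterm (i j : Fin n) : Integrable (fun ω => f (Y ω) i j * (X ω i * X ω j)) μ :=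
    (hXY.affineMap_apply_mul f i j).integrable_mul (integrable_affineMap_apply f hY i j) (hX i j)
  rw [integral_dotProduct_mulVec hX]
  simp only [dotProduct_mulVec_eq_sum]
  rw [integral_finsetSum _ fun i _ => integrable_finsetSum _ fun j _ => hterm i j]
  refine Finset.sum_congr rfl fun i _ => ?_
  rw [integral_finsetSum _ fun j _ => hterm i j]
  refine Finset.sum_congr rfl fun j _ => ?_
  rw [(hXY.affineMap_apply_mul f i j).integral_fun_mul_eq_mul_integral
    (integrable_affineMap_apply f hY i j).aestronglyMeasurable (hX i j).aestronglyMeasurable,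
    integral_affineMap_apply f hY hmean]

lemma integral_dotProduct_mulVec_le_pullbackBound [IsProbabilityMeasure μ] {Z : Ω → Fin n → ℝ}
    {Ybar : Matrix (Fin n) (Fin n) ℝ} (hXY : IndepFun X Y μ) (hYm : Measurable Y)
    (hY₀ : ∀ ω, (Y ω).PosSemidef) (hY₁ : ∀ ω, (1 - Y ω).PosSemidef)
    (hmean : ∀ k l, ∫ ω, Y ω k l ∂μ = Ybar k l)
    (hX : ∀ i j, Integrable (fun ω => X ω i * X ω j) μ)
    (hZ : ∀ i j, Integrable (fun ω => Z ω i * Z ω j) μ)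
    (hZX : ∀ ω, Z ω = (1 - Y ω) *ᵥ X ω) (N : Matrix (Fin n) (Fin n) ℝ) :
    ∫ ω, Z ω ⬝ᵥ (N *ᵥ Z ω) ∂μ ≤ ∫ ω, X ω ⬝ᵥ (pullbackBound N Ybar *ᵥ X ω) ∂μ := by
  have hY := integrable_apply_of_posSemidef (μ := μ) hYm hY₀ hY₁
  calc ∫ ω, Z ω ⬝ᵥ (N *ᵥ Z ω) ∂μ ≤ ∫ ω, X ω ⬝ᵥ (pullbackBound N (Y ω) *ᵥ X ω) ∂μ :=
        integral_mono (integrable_dotProduct_mulVec hZ N)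
          (integrable_dotProduct_affineMap_mulVec_of_indepFun hXY hX hY _) fun ω => by
            rw [hZX]; exact (hY₀ ω).one_sub_mulVec_dotProduct_mulVec_le (hY₁ ω) N (X ω)
    _ = ∫ ω, X ω ⬝ᵥ (pullbackBound N Ybar *ᵥ X ω) ∂μ :=
        integral_dotProduct_affineMap_mulVec_of_indepFun hXY hX hY hmean _

end Expectation

theorem sandwich_by_recursion_general {n : ℕ} {Ω : Type*} [MeasurableSpace Ω]
    (μ : Measure Ω) [IsProbabilityMeasure μ]
    (M : ℕ → Ω → Matrix (Fin n) (Fin n) ℝ)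
    (Δ : ℕ → Ω → (Fin n → ℝ))
    (Mbar : Matrix (Fin n) (Fin n) ℝ)
    (hMmeas : ∀ t, Measurable (M t))
    (hΔmeas : ∀ t, Measurable (Δ t))
    (hpsd : ∀ t ω, (M t ω).PosSemidef)
    (hcontr : ∀ t ω, ((1 : Matrix (Fin n) (Fin n) ℝ) - M t ω).PosSemidef)
    (hmean : ∀ t i j, (∫ ω, M t ω i j ∂μ) = Mbar i j)
    (hrec : ∀ t ω, Δ (t + 1) ω = ((1 : Matrix (Fin n) (Fin n) ℝ) - M t ω) *ᵥ Δ t ω)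
    (hindep : ∀ t, IndepFun (Δ t) (M t) μ)
    (hint : Integrable (fun ω => Δ 0 ω ⬝ᵥ Δ 0 ω) μ)
    (N : ℕ → Matrix (Fin n) (Fin n) ℝ)
    (hN0 : N 0 = Mbar)
    (hNrec : ∀ t : ℕ, N (t + 1) = N t * (1 - (2 : ℝ) • Mbar) + ‖N t‖ • Mbar) :
    ∀ t : ℕ,
      (∫ ω, Δ t ω ⬝ᵥ (Mbar *ᵥ Δ t ω) ∂μ) ≤ ∫ ω, Δ 0 ω ⬝ᵥ (N t *ᵥ Δ 0 ω) ∂μ := by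
  have hmom (u : ℕ) := integrable_mul_apply_of_dotProduct_self_le (hΔmeas u) hint fun ω =>
    dotProduct_self_le_of_one_sub_mulVec (X := (Δ · ω)) (fun t => hpsd t ω) (fun t => hcontr t ω)
      (fun t => hrec t ω) u
  have hcomm (s : ℕ) : Commute (N s) Mbar := by
    induction s with
    | zero => rw [hN0]
    | succ s ih =>
      rw [hNrec]
      exact (ih.mul_left ((Commute.one_left _).sub_left ((Commute.refl _).smul_left _))).add_left
        ((Commute.refl _).smul_left _)
  have hsandwich (s u : ℕ) :
      ∫ ω, Δ (u + s) ω ⬝ᵥ (Mbar *ᵥ Δ (u + s) ω) ∂μ ≤ ∫ ω, Δ u ω ⬝ᵥ (N s *ᵥ Δ u ω) ∂μ := by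
    induction s generalizing u with
    | zero => simp [hN0]
    | succ s ih =>
      calc ∫ ω, Δ (u + (s + 1)) ω ⬝ᵥ (Mbar *ᵥ Δ (u + (s + 1)) ω) ∂μ
          ≤ ∫ ω, Δ (u + 1) ω ⬝ᵥ (N s *ᵥ Δ (u + 1) ω) ∂μ := by
            rw [← add_assoc, add_right_comm]; exact ih (u + 1)
        _ ≤ ∫ ω, Δ u ω ⬝ᵥ (pullbackBound (N s) Mbar *ᵥ Δ u ω) ∂μ :=
            integral_dotProduct_mulVec_le_pullbackBound (hindep u) (hMmeas u) (hpsd u)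
              (hcontr u) (hmean u) (hmom u) (hmom (u + 1)) (hrec u) (N s)
        _ = ∫ ω, Δ u ω ⬝ᵥ (N (s + 1) *ᵥ Δ u ω) ∂μ := by
            rw [pullbackBound_eq_of_commute (hcomm s), hNrec]
  exact fun t => by simpa using hsandwich t 0

/-- for a stochastic contraction process with average rate `M̄`, and
the deterministic recursion `N₀ = M̄`, `N_{t+1} = N_t (I - 2M̄) + ‖N_t‖ M̄`, one has
`𝔼 ‖Δ_t‖²_{M̄} ≤ 𝔼 ‖Δ_0‖²_{N_t}`. -/
theorem sandwich_by_recursion {n : ℕ} {Ω : Type*} [MeasurableSpace Ω]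
    (μ : Measure Ω) [IsProbabilityMeasure μ]
    (M : ℕ → Ω → Matrix (Fin n) (Fin n) ℝ)
    (Δ : ℕ → Ω → (Fin n → ℝ))
    (Mbar : Matrix (Fin n) (Fin n) ℝ)
    (hMmeas : ∀ t, Measurable (M t))
    (hΔmeas : ∀ t, Measurable (Δ t))
    (hpsd : ∀ t ω, (M t ω).PosSemidef)
    (hcontr : ∀ t ω, ((1 : Matrix (Fin n) (Fin n) ℝ) - M t ω).PosSemidef)
    (hmean : ∀ t i j, (∫ ω, M t ω i j ∂μ) = Mbar i j)
    (hrec : ∀ t ω, Δ (t + 1) ω = ((1 : Matrix (Fin n) (Fin n) ℝ) - M t ω) *ᵥ Δ t ω)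
    (hiIndep : iIndepFun (m := fun _ : ℕ => matrixMeasurableSpace) M μ)
    (hindep : ∀ t, IndepFun (Δ t) (M t) μ)
    (hint : Integrable (fun ω => Δ 0 ω ⬝ᵥ Δ 0 ω) μ)
    (N : ℕ → Matrix (Fin n) (Fin n) ℝ)
    (hN0 : N 0 = Mbar)
    (hNrec : ∀ t : ℕ, N (t + 1) = N t * (1 - (2 : ℝ) • Mbar) + ‖N t‖ • Mbar) :
    ∀ t : ℕ,
      (∫ ω, Δ t ω ⬝ᵥ (Mbar *ᵥ Δ t ω) ∂μ) ≤ ∫ ω, Δ 0 ω ⬝ᵥ (N t *ᵥ Δ 0 ω) ∂μ :=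
  sandwich_by_recursion_general μ M Δ Mbar hMmeas hΔmeas hpsd hcontr hmean hrec hindep hint N hN0
    hNrec
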